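/- For every DLS program P, the least fixed point of IC_P is the least Herbrand model of P: it is itself a Herbrand model of P, and it is contained in every Herbrand model of P. -/

import Mathlib

namespace DLS

/-! Datalog with first-class facts (DLS): basic syntax and semantics. -/

variable {Rel Lit Var : Type}

/-- A value is either a literal or a fact `R(v₁,…,vₙ)`. -/
inductive Val (Rel Lit : Type) : Type where
  | lit : Lit → Val Rel Lit
  | fact : Rel → List (Val Rel Lit) → Val Rel Lit

/-- A fact is a relation symbol applied to a finite list of values. -/
abbrev Fact (Rel Lit : Type) : Type := Rel × List (Val Rel Lit)

/-- A database is a set of facts. -/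
abbrev Database (Rel Lit : Type) : Type := Set (Fact Rel Lit)

def Fact.toVal (f : Fact Rel Lit) : Val Rel Lit := Val.fact f.1 f.2

mutual
/-- All subfacts of a value: `subfact(R(v₁,…,vₙ)) = {R(v₁,…,vₙ)} ∪ ⋃ᵢ subfact(vᵢ)`,
    and `subfact(v) = ∅` for a literal `v`. -/
def Val.subfacts : Val Rel Lit → Set (Fact Rel Lit)
  | .lit _ => ∅
  | .fact R args => insert (R, args) (Val.subfactsList args)
def Val.subfactsList : List (Val Rel Lit) → Set (Fact Rel Lit)
  | [] => ∅
  | v :: vs => v.subfacts ∪ Val.subfactsList vs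
end

/-- The `subfact` function on facts. -/
def Fact.subfact (f : Fact Rel Lit) : Set (Fact Rel Lit) :=
  Val.subfacts (Val.fact f.1 f.2)

/-- A database is subfact-closed if `db = ⋃ {subfact(f) | f ∈ db}`. -/
def SubfactClosed (db : Database Rel Lit) : Prop :=
  db = ⋃ f ∈ db, Fact.subfact f

/-- An argument of a clause: a variable, a literal, or a (sub)clause. -/
inductive Arg (Rel Lit Var : Type) : Type where
  | var : Var → Arg Rel Lit Var
  | lit : Lit → Arg Rel Lit Var
  | clause : Rel → List (Arg Rel Lit Var) → Arg Rel Lit Var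

/-- A clause is a relation symbol applied to a finite list of arguments. -/
abbrev Clause (Rel Lit Var : Type) : Type := Rel × List (Arg Rel Lit Var)

/-- A substitution maps variables to values. -/
abbrev Subst (Rel Lit Var : Type) : Type := Var → Val Rel Lit

mutual
/-- Applying a substitution to an argument yields a value. -/
def Arg.subst (θ : Subst Rel Lit Var) : Arg Rel Lit Var → Val Rel Lit
  | .var x => θ x
  | .lit l => .lit l
  | .clause R args => .fact R (Arg.substList θ args)
def Arg.substList (θ : Subst Rel Lit Var) : List (Arg Rel Lit Var) → List (Val Rel Lit)
  | [] => []
  | a :: as => Arg.subst θ a :: Arg.substList θ as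
end

/-- `c[θ]`: the fact obtained by substituting each variable of clause `c` by its image. -/
def Clause.subst (θ : Subst Rel Lit Var) (c : Clause Rel Lit Var) : Fact Rel Lit :=
  (c.1, Arg.substList θ c.2)

mutual
/-- The variables occurring in an argument. -/
def Arg.vars : Arg Rel Lit Var → Set Var
  | .var x => {x}
  | .lit _ => ∅
  | .clause _ args => Arg.varsList args
def Arg.varsList : List (Arg Rel Lit Var) → Set Var
  | [] => ∅
  | a :: as => a.vars ∪ Arg.varsList as
end

/-- The variables occurring in a clause. -/
def Clause.vars (c : Clause Rel Lit Var) : Set Var := Arg.varsList c.2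

mutual
/-- The literals occurring in an argument. -/
def Arg.lits : Arg Rel Lit Var → Set Lit
  | .var _ => ∅
  | .lit l => {l}
  | .clause _ args => Arg.litsList args
def Arg.litsList : List (Arg Rel Lit Var) → Set Lit
  | [] => ∅
  | a :: as => a.lits ∪ Arg.litsList as
end

/-- The literals occurring in a clause. -/
def Clause.lits (c : Clause Rel Lit Var) : Set Lit := Arg.litsList c.2

/-- A rule has a head clause and a finite set of body clauses. -/
structure Rule (Rel Lit Var : Type) : Type where
  head : Clause Rel Lit Var
  body : Set (Clause Rel Lit Var)
  body_finite : body.Finite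

/-- The literals occurring in a rule. -/
def Rule.lits (R : Rule Rel Lit Var) : Set Lit :=
  R.head.lits ∪ ⋃ c ∈ R.body, c.lits

/-- A rule is well-scoped if every variable of the head occurs in the body. -/
def Rule.WellScoped (R : Rule Rel Lit Var) : Prop :=
  R.head.vars ⊆ ⋃ c ∈ R.body, c.vars

/-- Immediate consequence of a rule:
    `IC_R(db) = db ∪ ⋃ { subfact(Head(R)[θ]) | θ with Body(R)[θ] ⊆ db }`. -/
def Rule.IC (R : Rule Rel Lit Var) (db : Database Rel Lit) : Database Rel Lit :=
  db ∪ ⋃ (θ : Subst Rel Lit Var) (_ : ∀ c ∈ R.body, Clause.subst θ c ∈ db),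
      Fact.subfact (Clause.subst θ R.head)

/-- A DLS program is a finite set of well-scoped rules. -/
structure Program (Rel Lit Var : Type) : Type where
  rules : Set (Rule Rel Lit Var)
  rules_finite : rules.Finite
  wellScoped : ∀ R ∈ rules, R.WellScoped

/-- Immediate consequence of a program: `IC_P(db) = db ∪ ⋃_{R ∈ P} IC_R(db)`. -/
def Program.IC (P : Program Rel Lit Var) (db : Database Rel Lit) : Database Rel Lit :=
  db ∪ ⋃ R ∈ P.rules, R.IC db

theorem Rule.IC_mono (R : Rule Rel Lit Var) : Monotone R.IC := by
  intro a b hab x hx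
  rcases hx with hx | hx
  · exact Or.inl (hab hx)
  · right
    simp only [Set.mem_iUnion] at hx ⊢
    obtain ⟨θ, hθ, hm⟩ := hx
    exact ⟨θ, fun c hc => hab (hθ c hc), hm⟩

theorem Program.IC_mono (P : Program Rel Lit Var) : Monotone P.IC := by
  intro a b hab x hx
  rcases hx with hx | hx
  · exact Or.inl (hab hx)
  · right
    simp only [Set.mem_iUnion] at hx ⊢
    obtain ⟨R, hR, hm⟩ := hx
    exact ⟨R, hR, R.IC_mono hab hm⟩

/-- The immediate consequence operator `IC_P`, as a monotone map on the complete
    lattice of databases ordered by inclusion. Its least fixed point is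
    `OrderHom.lfp P.ICHom`. -/
def Program.ICHom (P : Program Rel Lit Var) : Database Rel Lit →o Database Rel Lit :=
  ⟨P.IC, P.IC_mono⟩

/-- `I ⊨ R`: for every substitution θ, `Body(R)[θ] ⊆ I` implies `Head(R)[θ] ∈ I`. -/
def Models (I : Database Rel Lit) (R : Rule Rel Lit Var) : Prop :=
  ∀ θ : Subst Rel Lit Var, (∀ c ∈ R.body, Clause.subst θ c ∈ I) → Clause.subst θ R.head ∈ I

/-- A Herbrand model of `P` is a subfact-closed database satisfying every rule of `P`. -/
def HerbrandModel (P : Program Rel Lit Var) (I : Database Rel Lit) : Prop :=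
  SubfactClosed I ∧ ∀ R ∈ P.rules, Models I R

/-- An argument is flat if it is a variable or a literal (not a nested clause). -/
def Arg.IsFlat : Arg Rel Lit Var → Prop
  | .clause _ _ => False
  | _ => True

/-- A clause is flat if every argument is a variable or a literal. -/
def Clause.Flat (c : Clause Rel Lit Var) : Prop := ∀ a ∈ c.2, a.IsFlat

/-- A rule is flat if its head clause and all its body clauses are flat. -/
def Rule.Flat (R : Rule Rel Lit Var) : Prop := R.head.Flat ∧ ∀ c ∈ R.body, c.Flat

/-- A fact is flat if every argument in its argument list is a literal. -/
def Fact.Flat (f : Fact Rel Lit) : Prop := ∀ v ∈ f.2, ∃ l : Lit, v = Val.lit l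

/-- `natFact z s n` encodes the natural number `n` as the fact
    `s(s(...(z())...))` with `n` applications of `s`. -/
def natFact (z s : Rel) : ℕ → Fact Rel Lit
  | 0 => (z, [])
  | n + 1 => (s, [(natFact z s n).toVal])


/-! The subfacts of a subfact are subfacts, so `IC_P` preserves subfact-closedness, and by
induction on the least fixed point it is subfact-closed. For a subfact-closed database `I`,
being a model of `P` is the same as being a prefixed point `IC_P(I) ⊆ I`; the least fixed point is
one, and lies below every other one. -/

theorem Fact.mem_subfact_self (f : Fact Rel Lit) : f ∈ f.subfact :=
  Set.mem_insert _ _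

mutual
theorem Val.subfact_subset_subfacts : ∀ (v : Val Rel Lit) (g : Fact Rel Lit),
    g ∈ v.subfacts → g.subfact ⊆ v.subfacts
  | .lit _, _, hg => by simp [Val.subfacts] at hg
  | .fact R args, g, hg => by
      rw [Val.subfacts] at hg
      rcases hg with rfl | hg
      · exact subset_rfl
      · exact (Val.subfact_subset_subfactsList args g hg).trans (Set.subset_insert _ _)
theorem Val.subfact_subset_subfactsList : ∀ (l : List (Val Rel Lit)) (g : Fact Rel Lit),
    g ∈ Val.subfactsList l → g.subfact ⊆ Val.subfactsList l
  | [], _, hg => by simp [Val.subfactsList] at hg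
  | v :: vs, g, hg => by
      rw [Val.subfactsList] at hg ⊢
      rcases hg with hg | hg
      · exact (Val.subfact_subset_subfacts v g hg).trans Set.subset_union_left
      · exact (Val.subfact_subset_subfactsList vs g hg).trans Set.subset_union_right
end

theorem Fact.subfact_subset_of_mem {f g : Fact Rel Lit} (hg : g ∈ f.subfact) :
    g.subfact ⊆ f.subfact :=
  Val.subfact_subset_subfacts _ g hg

theorem subfactClosed_iff {db : Database Rel Lit} :
    SubfactClosed db ↔ ∀ f ∈ db, f.subfact ⊆ db := by
  refine ⟨fun h f hf => h ▸ Set.subset_biUnion_of_mem (u := Fact.subfact) hf, fun h => ?_⟩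
  exact (Set.iUnion₂_subset h).antisymm' fun f hf => Set.mem_biUnion hf f.mem_subfact_self

theorem SubfactClosed.sUnion {S : Set (Database Rel Lit)} (hS : ∀ db ∈ S, SubfactClosed db) :
    SubfactClosed (⋃₀ S) := by
  refine subfactClosed_iff.2 fun f ⟨db, hdb, hf⟩ => ?_
  exact (subfactClosed_iff.1 (hS db hdb) f hf).trans (Set.subset_sUnion_of_mem hdb)

theorem Program.mem_IC {P : Program Rel Lit Var} {db : Database Rel Lit} {f : Fact Rel Lit} :
    f ∈ P.IC db ↔ f ∈ db ∨ ∃ R ∈ P.rules, ∃ θ : Subst Rel Lit Var,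
      (∀ c ∈ R.body, c.subst θ ∈ db) ∧ f ∈ (R.head.subst θ).subfact := by
  simp only [Program.IC, Rule.IC, Set.mem_union, Set.mem_iUnion, exists_prop]
  constructor
  · rintro (hf | ⟨R, hR, hf | ⟨θ, hθ, hf⟩⟩)
    exacts [.inl hf, .inl hf, .inr ⟨R, hR, θ, hθ, hf⟩]
  · rintro (hf | ⟨R, hR, θ, hθ, hf⟩)
    exacts [.inl hf, .inr ⟨R, hR, .inr ⟨θ, hθ, hf⟩⟩]

theorem SubfactClosed.IC {db : Database Rel Lit} (h : SubfactClosed db)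
    (P : Program Rel Lit Var) : SubfactClosed (P.IC db) := by
  refine subfactClosed_iff.2 fun f hf g hg => ?_
  rcases Program.mem_IC.1 hf with hf | ⟨R, hR, θ, hθ, hf⟩
  · exact Or.inl (subfactClosed_iff.1 h f hf hg)
  · exact Program.mem_IC.2 (.inr ⟨R, hR, θ, hθ, Fact.subfact_subset_of_mem hf hg⟩)

theorem herbrandModel_iff {P : Program Rel Lit Var} {I : Database Rel Lit} :
    HerbrandModel P I ↔ SubfactClosed I ∧ P.IC I ⊆ I := by
  refine and_congr_right fun hI => ⟨fun hM f hf => ?_, fun hIC R hR θ hθ => ?_⟩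
  · rcases Program.mem_IC.1 hf with hf | ⟨R, hR, θ, hθ, hf⟩
    · exact hf
    · exact subfactClosed_iff.1 hI _ (hM R hR θ hθ) hf
  · exact hIC (Program.mem_IC.2 (.inr ⟨R, hR, θ, hθ, Fact.mem_subfact_self _⟩))

/-- for every DLS program `P`, the least fixed point of `IC_P` is
the least Herbrand model of `P`: it is a Herbrand model of `P` and it is
contained in every Herbrand model of `P`. -/
theorem lfp_IC_least_herbrandModel {Rel Lit Var : Type} (P : Program Rel Lit Var) :
    HerbrandModel P (OrderHom.lfp P.ICHom) ∧
    ∀ I : Database Rel Lit, HerbrandModel P I → OrderHom.lfp P.ICHom ⊆ I := by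
  have hclosed : SubfactClosed (OrderHom.lfp P.ICHom) :=
    OrderHom.lfp_induction _ (fun db hdb _ => hdb.IC P) fun _ => SubfactClosed.sUnion
  exact ⟨herbrandModel_iff.2 ⟨hclosed, P.ICHom.map_lfp.le⟩,
    fun I hI => OrderHom.lfp_le _ (herbrandModel_iff.1 hI).2⟩

end DLS
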